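/- arXiv:math/9906113 — 5 statements merged into one kernel-verified Lean document; each statement's English description precedes it below -/
import Mathlib

section
/- There exists a linear order L of cardinality ℵ_1 such that the product L × L, partially ordered coordinatewise ((a,b) ≤ (a',b') iff a ≤ a' and b ≤ b'), is the union of countably many chains. -/
/-!
Todorčević's Countryman line. By recursion along a well-order all of whose initial segments are
countable, one builds functions `e β` on `Iio β` with values in `ℕ` that are finite-to-one and
coherent: `e α` and `e β` differ at only finitely many points of `α`. Order the points `β` by the
lexicographic order of `e β`. Colour a pair `β ≤ γ` by a bound `n` exceeding every value at which
`e β` and `e γ` disagree, together with the finitely many values below `n` of `e β` and of `e γ`,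
listed in increasing order of the argument; there are countably many colours. If two pairs of the
same colour have first coordinates that first differ at `ξ₀`, the recorded lists force their second
coordinates to agree below `ξ₀` and to compare at `ξ₀` in the same direction, so every colour class
is a chain in the product order.
-/

open Cardinal Set

theorem apply_eq_of_map_eq_of_pairwise_lt {α β : Type*} [LinearOrder α] {f f' : α → β} :
    ∀ {l l' : List α}, l.Pairwise (· < ·) → l'.Pairwise (· < ·) → l.map f = l'.map f' →
      ∀ {ξ}, ξ ∈ l → (∀ η ≤ ξ, η ∈ l ↔ η ∈ l') → f ξ = f' ξ
  | [], _, _, _, _, _, hξ, _ => absurd hξ List.not_mem_nil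
  | _ :: _, [], _, _, hmap, _, _, _ => by simp at hmap
  | x :: t, x' :: t', hl, hl', hmap, ξ, hξ, hmem => by
    rw [List.pairwise_cons] at hl hl'
    simp only [List.map_cons, List.cons.injEq] at hmap
    have head_le : ∀ {y z : α} {u : List α}, (∀ w ∈ u, y < w) → z ∈ y :: u → y ≤ z :=
      fun hu hz => (List.mem_cons.1 hz).elim ge_of_eq fun h => (hu _ h).le
    have hxξ : x ≤ ξ := head_le hl.1 hξ
    have hx'x : x' ≤ x := head_le hl'.1 ((hmem x hxξ).1 List.mem_cons_self)
    obtain rfl : x = x' :=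
      le_antisymm (head_le hl.1 ((hmem x' (hx'x.trans hxξ)).2 List.mem_cons_self)) hx'x
    rcases List.mem_cons.1 hξ with rfl | hξt
    · exact hmap.1
    · have mem_tail : ∀ {u : List α}, (∀ w ∈ u, x < w) → ∀ η, (η ∈ u ↔ η ∈ x :: u ∧ x < η) :=
        fun hu η => ⟨fun h => ⟨List.mem_cons_of_mem _ h, hu η h⟩,
          fun ⟨h, hxη⟩ => (List.mem_cons.1 h).resolve_left hxη.ne'⟩
      refine apply_eq_of_map_eq_of_pairwise_lt hl.2 hl'.2 hmap.2 hξt fun η hη => ?_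
      rw [mem_tail hl.1, mem_tail hl'.1, hmem η hη]

theorem Pi.toLex_lt_toLex_iff {ι α : Type*} [LT ι] [LT α] {f g : ι → α} :
    toLex f < toLex g ↔ ∃ i, (∀ j < i, f j = g j) ∧ f i < g i :=
  Iff.rfl

-- `a β` is only relevant on `Iic β`; `apply_self_ne` says that `a β` is never an initial
-- segment of `a γ`.
structure IsCoherentFamily {ι : Type*} [LinearOrder ι] (a : ι → ι → ℕ) : Prop where
  apply_self_ne : ∀ {β γ : ι}, β < γ → a β β ≠ a γ β
  finite_le_lt : ∀ β n, {ξ | ξ ≤ β ∧ a β ξ < n}.Finite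
  finite_ne : ∀ β γ, {ξ | ξ ≤ β ∧ ξ ≤ γ ∧ a β ξ ≠ a γ ξ}.Finite

namespace IsCoherentFamily

variable {ι : Type*} [LinearOrder ι] {a : ι → ι → ℕ}

theorem le_of_apply_ne (ha : IsCoherentFamily a) {β β' ξ : ι} (hagree : ∀ η < ξ, a β η = a β' η)
    (hne : a β ξ ≠ a β' ξ) : ξ ≤ β ∧ ξ ≤ β' := by
  have le_of_lt : ∀ {β β'}, (∀ η < ξ, a β η = a β' η) → β < β' → ξ ≤ β :=
    fun hagree hlt => le_of_not_gt fun h => ha.apply_self_ne hlt (hagree _ h)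
  rcases lt_trichotomy β β' with h | rfl | h
  · exact ⟨le_of_lt hagree h, (le_of_lt hagree h).trans h.le⟩
  · exact absurd rfl hne
  · have := le_of_lt (fun η hη => (hagree η hη).symm) h
    exact ⟨this.trans h.le, this⟩

theorem injective (ha : IsCoherentFamily a) : Function.Injective a := by
  intro β β' h
  by_contra hne
  rcases lt_or_gt_of_ne hne with hlt | hlt
  · exact ha.apply_self_ne hlt (by rw [h])
  · exact ha.apply_self_ne hlt (by rw [h])

noncomputable def bound (ha : IsCoherentFamily a) (β γ : ι) : ℕ :=
  (ha.finite_ne β γ).toFinset.sup (fun ξ => max (a β ξ) (a γ ξ)) + 1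

noncomputable def lowValues (ha : IsCoherentFamily a) (β : ι) (n : ℕ) : List ℕ :=
  ((ha.finite_le_lt β n).toFinset.sort).map (a β)

noncomputable def color (ha : IsCoherentFamily a) (β γ : ι) : ℕ × List ℕ × List ℕ :=
  (ha.bound β γ, ha.lowValues β (ha.bound β γ), ha.lowValues γ (ha.bound β γ))

theorem max_lt_bound (ha : IsCoherentFamily a) {β γ ξ : ι}
    (hξ : ξ ≤ β ∧ ξ ≤ γ ∧ a β ξ ≠ a γ ξ) : max (a β ξ) (a γ ξ) < ha.bound β γ :=
  Nat.lt_succ_of_le (Finset.le_sup (f := fun ξ => max (a β ξ) (a γ ξ))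
    ((ha.finite_ne β γ).mem_toFinset.2 hξ))

theorem apply_eq_of_bound_le (ha : IsCoherentFamily a) {β γ ξ : ι} (hβ : ξ ≤ β) (hγ : ξ ≤ γ)
    (h : ha.bound β γ ≤ a β ξ) : a γ ξ = a β ξ := by
  by_contra hne
  exact (ha.max_lt_bound ⟨hβ, hγ, Ne.symm hne⟩).not_ge (h.trans (le_max_left _ _))

theorem apply_lt_bound_iff (ha : IsCoherentFamily a) {β γ ξ : ι} (hβ : ξ ≤ β) (hγ : ξ ≤ γ) :
    a β ξ < ha.bound β γ ↔ a γ ξ < ha.bound β γ := by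
  by_cases hne : a β ξ = a γ ξ
  · rw [hne]
  · obtain ⟨hlt, hlt'⟩ := max_lt_iff.1 (ha.max_lt_bound ⟨hβ, hγ, hne⟩)
    exact iff_of_true hlt hlt'

theorem apply_eq_of_lowValues_eq (ha : IsCoherentFamily a) {β β' ξ : ι} {n n' : ℕ}
    (h : ha.lowValues β n = ha.lowValues β' n') (hξ : ξ ≤ β ∧ a β ξ < n)
    (hmem : ∀ η ≤ ξ, (η ≤ β ∧ a β η < n ↔ η ≤ β' ∧ a β' η < n')) : a β ξ = a β' ξ := by
  refine apply_eq_of_map_eq_of_pairwise_lt (Finset.sortedLT_sort _).pairwise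
    (Finset.sortedLT_sort _).pairwise h ?_ fun η hη => ?_
  · rwa [Finset.mem_sort, Set.Finite.mem_toFinset]
  · simpa only [Finset.mem_sort, Set.Finite.mem_toFinset, Set.mem_ofPred_eq] using hmem η hη

theorem lt_of_color_eq_of_lt (ha : IsCoherentFamily a) {β γ β' γ' : ι} (hβγ : β ≤ γ)
    (hβγ' : β' ≤ γ') (hc : ha.color β γ = ha.color β' γ')
    (hlt : toLex (a β) < toLex (a β')) : toLex (a γ) < toLex (a γ') := by
  obtain ⟨ξ₀, hagree, hval⟩ := Pi.toLex_lt_toLex_iff.1 hlt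
  obtain ⟨hξβ, hξβ'⟩ := ha.le_of_apply_ne hagree hval.ne
  simp only [color, Prod.mk.injEq] at hc
  obtain ⟨hn, hS, hT⟩ := hc
  set n := ha.bound β γ
  rw [← hn] at hS hT
  have low : ∀ η ≤ β, a β η < n ↔ a γ η < n := fun η hη =>
    ha.apply_lt_bound_iff hη (hη.trans hβγ)
  have low' : ∀ η ≤ β', a β' η < n ↔ a γ' η < n := fun η hη =>
    hn ▸ ha.apply_lt_bound_iff hη (hη.trans hβγ')
  have high : ∀ η ≤ β, n ≤ a β η → a γ η = a β η := fun η hη =>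
    ha.apply_eq_of_bound_le hη (hη.trans hβγ)
  have high' : ∀ η ≤ β', n ≤ a β' η → a γ' η = a β' η := fun η hη =>
    hn ▸ ha.apply_eq_of_bound_le hη (hη.trans hβγ')
  refine Pi.toLex_lt_toLex_iff.2 ⟨ξ₀, fun η hη => ?_, ?_⟩
  · have hηβ : η ≤ β := hη.le.trans hξβ
    have hηβ' : η ≤ β' := hη.le.trans hξβ'
    by_cases hηn : a β η < n
    · refine ha.apply_eq_of_lowValues_eq hT ⟨hηβ.trans hβγ, (low η hηβ).1 hηn⟩ fun ρ hρ => ?_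
      have hρ₀ : ρ < ξ₀ := hρ.trans_lt hη
      rw [← low ρ (hρ₀.le.trans hξβ), hagree ρ hρ₀, low' ρ (hρ₀.le.trans hξβ')]
      simp only [hρ₀.le.trans hξβ |>.trans hβγ, hρ₀.le.trans hξβ' |>.trans hβγ', true_and]
    · rw [not_lt] at hηn
      rw [high η hηβ hηn, hagree η hη, high' η hηβ' (hagree η hη ▸ hηn)]
  · by_cases hβ'n : a β' ξ₀ < n
    · -- then `ξ₀` sits at the same position of both sorted low sets, so the lists `hS` clash
      refine absurd (ha.apply_eq_of_lowValues_eq hS ⟨hξβ, hval.trans hβ'n⟩ fun ρ hρ => ?_) hval.ne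
      rcases hρ.lt_or_eq with hρ | rfl
      · rw [hagree ρ hρ]
        simp only [hρ.le.trans hξβ, hρ.le.trans hξβ', true_and]
      · exact iff_of_true ⟨hξβ, hval.trans hβ'n⟩ ⟨hξβ', hβ'n⟩
    · by_cases hβn : a β ξ₀ < n
      · exact ((low ξ₀ hξβ).1 hβn).trans_le (not_lt.1 fun h => hβ'n ((low' ξ₀ hξβ').2 h))
      · rw [high ξ₀ hξβ (not_lt.1 hβn), high' ξ₀ hξβ' (not_lt.1 hβ'n)]
        exact hval

theorem comparable_of_color_eq [WellFoundedLT ι] (ha : IsCoherentFamily a) {β γ β' γ' : ι}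
    (hβγ : β ≤ γ) (hβγ' : β' ≤ γ') (hc : ha.color β γ = ha.color β' γ') :
    (toLex (a β) ≤ toLex (a β') ∧ toLex (a γ) ≤ toLex (a γ')) ∨
      (toLex (a β') ≤ toLex (a β) ∧ toLex (a γ') ≤ toLex (a γ)) := by
  rcases lt_trichotomy (toLex (a β)) (toLex (a β')) with h | h | h
  · exact Or.inl ⟨h.le, (ha.lt_of_color_eq_of_lt hβγ hβγ' hc h).le⟩
  · obtain rfl := ha.injective (toLex.injective h)
    exact (le_total (toLex (a γ)) (toLex (a γ'))).imp (⟨le_rfl, ·⟩) (⟨le_rfl, ·⟩)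
  · exact Or.inr ⟨h.le, (ha.lt_of_color_eq_of_lt hβγ' hβγ hc.symm h).le⟩

noncomputable def pairColor (ha : IsCoherentFamily a) (p : ι × ι) : Bool × ℕ × List ℕ × List ℕ :=
  if p.1 ≤ p.2 then (true, ha.color p.1 p.2) else (false, ha.color p.2 p.1)

theorem comparable_of_pairColor_eq [WellFoundedLT ι] (ha : IsCoherentFamily a) {p q : ι × ι}
    (h : ha.pairColor p = ha.pairColor q) :
    (toLex (a p.1) ≤ toLex (a q.1) ∧ toLex (a p.2) ≤ toLex (a q.2)) ∨
      (toLex (a q.1) ≤ toLex (a p.1) ∧ toLex (a q.2) ≤ toLex (a p.2)) := by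
  by_cases hp : p.1 ≤ p.2 <;> by_cases hq : q.1 ≤ q.2 <;>
    simp only [pairColor, hp, hq, if_true, if_false, Prod.mk.injEq, Bool.true_eq_false,
      Bool.false_eq_true, false_and, true_and] at h
  · exact ha.comparable_of_color_eq hp hq h
  · exact (ha.comparable_of_color_eq (le_of_not_ge hp) (le_of_not_ge hq) h).imp And.symm And.symm

theorem exists_chain_cover [WellFoundedLT ι] (ha : IsCoherentFamily a) :
    ∃ C : ℕ → Set (ι × ι), (⋃ n, C n) = Set.univ ∧
      ∀ n, IsChain (fun p q : ι × ι => toLex (a p.1) ≤ toLex (a q.1) ∧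
        toLex (a p.2) ≤ toLex (a q.2)) (C n) :=
  ⟨fun n => {p | Encodable.decode n = some (ha.pairColor p)},
    eq_univ_of_forall fun _ => mem_iUnion.2 ⟨_, Encodable.encodek _⟩,
    fun _ _ hp _ hq _ => ha.comparable_of_pairColor_eq (Option.some_injective _ (hp.symm.trans hq))⟩

end IsCoherentFamily

section Construction

variable {ι : Type*} [LinearOrder ι]

-- Encodes `e β` on `Iio β` as a total function: the padding by `0` makes the lexicographic
-- order put an initial segment below all of its extensions.
def shiftBelow (e : ι → ι → ℕ) (β ξ : ι) : ℕ := if ξ < β then e β ξ + 1 else 0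

theorem isCoherentFamily_shiftBelow {e : ι → ι → ℕ}
    (hfin : ∀ β n, {ξ | ξ < β ∧ e β ξ < n}.Finite)
    (hcoh : ∀ α β, α < β → {ξ | ξ < α ∧ e α ξ ≠ e β ξ}.Finite) :
    IsCoherentFamily (shiftBelow e) where
  apply_self_ne hlt := by simp [shiftBelow, hlt]
  finite_le_lt β n := by
    refine ((hfin β n).union (finite_singleton β)).subset fun ξ ⟨hξβ, hξn⟩ => ?_
    rcases hξβ.lt_or_eq with h | h
    · simp only [shiftBelow, h, if_true] at hξn
      exact Or.inl ⟨h, by omega⟩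
    · exact Or.inr h
  finite_ne β γ := by
    wlog hβγ : β ≤ γ generalizing β γ
    · exact (this γ β (le_of_not_ge hβγ)).subset fun ξ ⟨h₁, h₂, h₃⟩ => ⟨h₂, h₁, h₃.symm⟩
    rcases hβγ.lt_or_eq with hβγ | rfl
    · refine ((hcoh β γ hβγ).union (finite_singleton β)).subset fun ξ ⟨hξβ, _, hne⟩ => ?_
      rcases hξβ.lt_or_eq with h | h
      · simp only [shiftBelow, h, h.trans hβγ, if_true, ne_eq, add_left_inj] at hne
        exact Or.inl ⟨h, hne⟩
      · exact Or.inr h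
    · simp

variable [WellFoundedLT ι]

-- For the first `k` with `ξ < s β k < β`, `e β ξ = max (e (s β k) ξ) k`: a value below `n` forces
-- `k < n`, which gives finite-to-one, and `k ≤ M` on `Iio (s β M)`, which gives coherence.
open Classical in
noncomputable def coherentSeq (s : ι → ℕ → ι) : ι → ι → ℕ :=
  WellFoundedLT.fix fun β e ξ =>
    if h : ∃ k, ξ < s β k ∧ s β k < β then
      max (e (s β (Nat.find h)) (Nat.find_spec h).2 ξ) (Nat.find h)
    else 0

theorem exists_coherentSeq_eq_max (s : ι → ℕ → ι) {β ξ : ι} {M : ℕ}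
    (hM : ξ < s β M ∧ s β M < β) :
    ∃ k ≤ M, ξ < s β k ∧ s β k < β ∧
      coherentSeq s β ξ = max (coherentSeq s (s β k) ξ) k := by
  classical
  have h : ∃ k, ξ < s β k ∧ s β k < β := ⟨M, hM⟩
  refine ⟨Nat.find h, Nat.find_min' h hM, Nat.find_spec h |>.1, Nat.find_spec h |>.2, ?_⟩
  rw [coherentSeq, WellFoundedLT.fix_eq, dif_pos h]

theorem finite_coherentSeq_lt (s : ι → ℕ → ι) (hs : ∀ β, Iio β ⊆ range (s β)) {β : ι}
    (IH : ∀ γ < β, ∀ n, {ξ | ξ < γ ∧ coherentSeq s γ ξ < n}.Finite) (n : ℕ) :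
    {ξ | ξ < β ∧ coherentSeq s β ξ < n}.Finite := by
  have hK : {k | k < n ∧ s β k < β}.Finite := (finite_lt_nat n).subset fun _ hk => hk.1
  have hmax : {ξ | ξ < β ∧ ∀ η < β, η ≤ ξ}.Subsingleton :=
    fun ξ hξ ξ' hξ' => le_antisymm (hξ'.2 ξ hξ.1) (hξ.2 ξ' hξ'.1)
  refine ((hK.biUnion fun k hk => IH _ hk.2 n).union hmax.finite).subset ?_
  rintro ξ ⟨hξβ, hξn⟩
  by_cases htop : ∀ η < β, η ≤ ξ
  · exact Or.inr ⟨hξβ, htop⟩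
  push Not at htop
  obtain ⟨η, hηβ, hξη⟩ := htop
  obtain ⟨M, rfl⟩ := hs β hηβ
  obtain ⟨k, -, hξk, hkβ, heq⟩ := exists_coherentSeq_eq_max s ⟨hξη, hηβ⟩
  rw [heq, max_lt_iff] at hξn
  exact Or.inl (mem_biUnion ⟨hξn.2, hkβ⟩ ⟨hξk, hξn.1⟩)

theorem finite_coherentSeq_ne (s : ι → ℕ → ι) (hs : ∀ β, Iio β ⊆ range (s β)) {β : ι}
    (IHfin : ∀ γ < β, ∀ n, {ξ | ξ < γ ∧ coherentSeq s γ ξ < n}.Finite)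
    (IHcoh : ∀ γ < β, ∀ δ < β,
      {ξ | ξ < γ ∧ ξ < δ ∧ coherentSeq s γ ξ ≠ coherentSeq s δ ξ}.Finite)
    {α : ι} (hα : α < β) : {ξ | ξ < α ∧ coherentSeq s α ξ ≠ coherentSeq s β ξ}.Finite := by
  obtain ⟨M, rfl⟩ := hs β hα
  have hK : {k | k ≤ M ∧ s β k < β}.Finite := (finite_le_nat M).subset fun _ hk => hk.1
  refine (hK.biUnion fun k hk => (IHcoh _ hk.2 _ hα).union (IHfin _ hk.2 M)).subset ?_
  rintro ξ ⟨hξα, hξne⟩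
  obtain ⟨k, hkM, hξk, hkβ, heq⟩ := exists_coherentSeq_eq_max s ⟨hξα, hα⟩
  refine mem_biUnion ⟨hkM, hkβ⟩ ?_
  by_cases hlow : coherentSeq s (s β k) ξ < k
  · exact Or.inr ⟨hξk, hlow.trans_le hkM⟩
  · rw [heq, max_eq_left (not_lt.1 hlow)] at hξne
    exact Or.inl ⟨hξk, hξα, hξne.symm⟩

theorem coherentSeq_spec (s : ι → ℕ → ι) (hs : ∀ β, Iio β ⊆ range (s β)) (β : ι) :
    (∀ n, {ξ | ξ < β ∧ coherentSeq s β ξ < n}.Finite) ∧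
      ∀ α < β, {ξ | ξ < α ∧ coherentSeq s α ξ ≠ coherentSeq s β ξ}.Finite := by
  induction β using WellFoundedLT.induction with
  | _ β IH =>
    refine ⟨finite_coherentSeq_lt s hs fun γ hγ => (IH γ hγ).1,
      fun α hα => finite_coherentSeq_ne s hs (fun γ hγ => (IH γ hγ).1) (fun γ hγ δ hδ => ?_) hα⟩
    rcases lt_trichotomy γ δ with h | rfl | h
    · exact ((IH δ hδ).2 γ h).subset fun ξ hξ => ⟨hξ.1, hξ.2.2⟩
    · simp
    · exact ((IH γ hγ).2 δ h).subset fun ξ hξ => ⟨hξ.2.1, hξ.2.2.symm⟩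

theorem exists_isCoherentFamily (hι : ∀ β : ι, (Iio β).Countable) :
    ∃ a : ι → ι → ℕ, IsCoherentFamily a := by
  choose s hs using fun β : ι =>
    haveI : Nonempty ι := ⟨β⟩
    countable_iff_exists_subset_range.1 (hι β)
  exact ⟨_, isCoherentFamily_shiftBelow (fun β => (coherentSeq_spec s hs β).1)
    fun α β => (coherentSeq_spec s hs β).2 α⟩

end Construction

/-- There is a linear order `L` of cardinality `ℵ₁` (a Countryman line) such that
`L × L`, ordered coordinatewise, is the union of countably many chains. -/
theorem stmt12 :
    ∃ (L : Type) (_ : LinearOrder L), #L = Cardinal.aleph 1 ∧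
      ∃ C : ℕ → Set (L × L),
        (⋃ n, C n) = Set.univ ∧
        ∀ n, IsChain (fun p q : L × L => p.1 ≤ q.1 ∧ p.2 ≤ q.2) (C n) := by
  obtain ⟨a, ha⟩ := exists_isCoherentFamily (ι := (aleph 1).ord.ToType) fun β =>
    le_aleph0_iff_set_countable.1 (lt_aleph_one_iff.1 (by simpa using mk_Iio_lt β))
  obtain ⟨C, hC, hchain⟩ := ha.exists_chain_cover
  exact ⟨_, LinearOrder.lift' (fun β => toLex (a β)) (toLex.injective.comp ha.injective),
    (mk_toType _).trans (card_ord _), C, hC, hchain⟩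
end

section
/- Let L be a linear order such that the product L × L, partially ordered coordinatewise ((a,b) ≤ (a',b') iff a ≤ a' and b ≤ b'), is the union of countably many chains. Then there is no uncountable linear order M that order-embeds into both L and the reverse (opposite) order of L. -/
open Cardinal

/-- If `L` is a linear order such that `L × L` (ordered coordinatewise) is the
union of countably many chains, then no uncountable linear order embeds into
both `L` and the reverse of `L`. -/
theorem stmt13 (L : Type u) [LinearOrder L]
    (C : ℕ → Set (L × L))
    (hC : (⋃ n, C n) = Set.univ)
    (hchain : ∀ n, IsChain (fun p q : L × L => p.1 ≤ q.1 ∧ p.2 ≤ q.2) (C n)) :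
    ¬ ∃ (M : Type u) (_ : LinearOrder M), Cardinal.aleph0 < #M ∧
        Nonempty (@RelEmbedding M L (· < ·) (· < ·)) ∧
        Nonempty (@RelEmbedding M L (· < ·) (fun a b => b < a)) := by
  rintro ⟨M, _, hM, ⟨f⟩, ⟨g⟩⟩
  set φ : M → L × L := fun m => (f m, g m) with hφ
  have hsub : ∀ n, (φ ⁻¹' C n).Subsingleton := by
    intro n a ha b hb
    by_contra hne
    have hφne : φ a ≠ φ b := by
      intro h
      exact hne (f.injective (congrArg Prod.fst h))
    rcases lt_or_gt_of_ne hne with h | h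
    · have h1 : f a < f b := f.map_rel_iff.2 h
      have h2 : g b < g a := g.map_rel_iff.2 h
      rcases hchain n ha hb hφne with ⟨_, h3⟩ | ⟨h3, _⟩
      · exact absurd h3 (not_le_of_gt h2)
      · exact absurd h3 (not_le_of_gt h1)
    · have h1 : f b < f a := f.map_rel_iff.2 h
      have h2 : g a < g b := g.map_rel_iff.2 h
      rcases hchain n ha hb hφne with ⟨h3, _⟩ | ⟨_, h3⟩
      · exact absurd h3 (not_le_of_gt h1)
      · exact absurd h3 (not_le_of_gt h2)
  have huniv : (Set.univ : Set M).Countable := by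
    have : (Set.univ : Set M) = ⋃ n, φ ⁻¹' C n := by
      rw [← Set.preimage_iUnion, hC, Set.preimage_univ]
    rw [this]
    exact Set.countable_iUnion fun n => (hsub n).countable
  have : Countable M := Set.countable_univ_iff.mp huniv
  exact absurd Cardinal.mk_le_aleph0 hM.not_ge
end

section
/- Let κ be an infinite regular cardinal and λ a cardinal with λ > 2^κ. Then λ^κ = cf([λ]^{≤κ}, ⊆). -/
open Cardinal

/-- `cf([Y]^{≤κ}, ⊆)`: the least cardinality of a family of subsets of `Y` of
cardinality `≤ κ` which is cofinal under inclusion among all such subsets. -/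
noncomputable def covCof (Y : Type u) (κ : Cardinal.{u}) : Cardinal.{u} :=
  sInf {c : Cardinal.{u} |
    ∃ Q : Set {s : Set Y // #s ≤ κ}, #Q = c ∧
      ∀ a : {s : Set Y // #s ≤ κ}, ∃ b ∈ Q, a.1 ⊆ b.1}

/-!
Every `f : κ → λ` has range of size `≤ κ`, so it lands in some member `b` of a cofinal family `Q`
of `[λ]^{≤κ}`; as each `b` carries at most `κ^κ = 2^κ` such functions, `λ^κ ≤ |Q| · 2^κ`.
Since `λ > 2^κ`, this forces `|Q| ≥ λ^κ`. Conversely `[λ]^{≤κ}` itself has size `λ^κ`.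
-/

open Set

theorem covCof_le_mk_bounded_set (Y : Type u) (κ : Cardinal.{u}) :
    covCof Y κ ≤ #{s : Set Y // #s ≤ κ} :=
  csInf_le' ⟨Set.univ, mk_univ, fun a => ⟨a, mem_univ a, subset_rfl⟩⟩

theorem covCof_le_power (Y : Type u) (κ : Cardinal.{u}) : covCof Y κ ≤ max #Y ℵ₀ ^ κ :=
  (covCof_le_mk_bounded_set Y κ).trans (mk_bounded_set_le Y κ)

theorem exists_cofinal_mk_eq_covCof (Y : Type u) (κ : Cardinal.{u}) :
    ∃ Q : Set {s : Set Y // #s ≤ κ}, #Q = covCof Y κ ∧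
      ∀ a : {s : Set Y // #s ≤ κ}, ∃ b ∈ Q, a.1 ⊆ b.1 :=
  csInf_mem (s := {c | ∃ Q : Set {s : Set Y // #s ≤ κ}, #Q = c ∧
      ∀ a : {s : Set Y // #s ≤ κ}, ∃ b ∈ Q, a.1 ⊆ b.1})
    ⟨_, Set.univ, rfl, fun a => ⟨a, mem_univ a, subset_rfl⟩⟩

theorem power_le_mul_power_self_of_cofinal {Y : Type u} {κ : Cardinal.{u}}
    {Q : Set {s : Set Y // #s ≤ κ}}
    (hQ : ∀ a : {s : Set Y // #s ≤ κ}, ∃ b ∈ Q, a.1 ⊆ b.1) :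
    #Y ^ κ ≤ #Q * κ ^ κ := by
  have hsurj : Function.Surjective
      (fun p : Σ b : Q, (κ.out → (b.1.1 : Set Y)) => fun i => (p.2 i : Y)) := by
    intro f
    obtain ⟨b, hbQ, hfb⟩ := hQ ⟨range f, mk_range_le.trans_eq (mk_out κ)⟩
    exact ⟨⟨⟨b, hbQ⟩, fun i => ⟨f i, hfb (mem_range_self i)⟩⟩, rfl⟩
  calc #Y ^ κ = #(κ.out → Y) := by rw [← power_def, mk_out]
    _ ≤ #(Σ b : Q, (κ.out → (b.1.1 : Set Y))) := mk_le_of_surjective hsurj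
    _ = sum fun b : Q => #(b.1.1 : Set Y) ^ κ := by simp only [mk_sigma, ← power_def, mk_out]
    _ ≤ sum fun _ : Q => κ ^ κ := sum_le_sum _ _ fun b => power_le_power_right b.1.2
    _ = #Q * κ ^ κ := sum_const' _ _

theorem power_le_covCof_mul_power_self (Y : Type u) (κ : Cardinal.{u}) :
    #Y ^ κ ≤ covCof Y κ * κ ^ κ := by
  obtain ⟨Q, hQcard, hQ⟩ := exists_cofinal_mk_eq_covCof Y κ
  exact hQcard ▸ power_le_mul_power_self_of_cofinal hQ

/-- If `κ` is an infinite regular cardinal and `λ > 2^κ`, then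
`λ^κ = cf([λ]^{≤κ}, ⊆)`. -/
theorem stmt17 (κ lam : Cardinal.{u}) (hκ : κ.IsRegular)
    (hlam : (2 : Cardinal.{u}) ^ κ < lam) :
    lam ^ κ = covCof lam.ord.ToType κ := by
  have hκ0 : ℵ₀ ≤ κ := hκ.aleph0_le
  have h2κ : ℵ₀ ≤ 2 ^ κ := hκ0.trans (cantor κ).le
  have hY : #lam.ord.ToType = lam := mk_ord_toType lam
  apply le_antisymm
  · have hle : lam ^ κ ≤ max (covCof lam.ord.ToType κ) (2 ^ κ) := by
      have h := power_le_covCof_mul_power_self lam.ord.ToType κ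
      rw [hY, power_self_eq hκ0] at h
      exact h.trans (mul_le_max_of_aleph0_le_right h2κ)
    have hbig : ¬ lam ^ κ ≤ 2 ^ κ :=
      (hlam.trans_le (self_le_power lam (one_le_aleph0.trans hκ0))).not_ge
    exact (le_max_iff.1 hle).resolve_right hbig
  · calc covCof lam.ord.ToType κ ≤ max #lam.ord.ToType ℵ₀ ^ κ := covCof_le_power _ κ
      _ = lam ^ κ := by rw [hY, max_eq_left (h2κ.trans hlam.le)]
end

section
/- Let κ be a singular cardinal, σ = cf(κ), and let ⟨κ_i : i < σ⟩ be a strictly increasing sequence of regular cardinals with supremum κ such that σ < κ_i < κ for every i < σ. Let λ be a cardinal with λ > 2^κ. Then λ^κ = sup_{i<σ} λ^{κ_i} = sup_{i<σ} cf([λ]^{≤κ_i}, ⊆). -/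
/-!
Induction on `λ > 2^κ`. If `λ ≤ ν^κ` for some `ν < λ`, then `λ^κ = ν^κ` and the induction
hypothesis for `ν` applies. Otherwise `ν^κ < λ` for every `ν < λ`; truncating functions below a
cofinal set gives `λ^κ ≤ λ^{cf λ}`, and when `κ < cf λ` every function `κ → λ` is bounded, so
`λ^κ = λ`. As `cf λ` is regular and `κ` is singular, `cf λ ≠ κ`, so in both cases `λ^κ ≤ λ^τ` for
some `τ < κ`, which is at most `λ^{κ_i}` for some `i`.

For `c < κ` we have `2^c < λ`, and each member of a cofinal family in `[λ]^{≤c}` contains at most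
`2^c` elements of `[λ]^{≤c}`, so `cf([λ]^{≤c}, ⊆) = |[λ]^{≤c}| = λ^c`.
-/

open Cardinal Set Ordinal

universe u

namespace Cardinal

theorem mk_Iio_ord_toType_lt {μ : Cardinal.{u}} (b : μ.ord.ToType) : #(Iio b) < μ := by
  simpa using mk_Iio_lt b

theorem power_le_iSup_power_of_lt_iSup {ι : Type u} {f : ι → Cardinal.{u}} {μ τ : Cardinal.{u}}
    (hμ : μ ≠ 0) (hτ : τ < ⨆ i, f i) : μ ^ τ ≤ ⨆ i, μ ^ f i := by
  obtain ⟨i, hi⟩ := exists_lt_of_lt_ciSup' hτ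
  exact (power_le_power_left hμ hi.le).trans (le_ciSup bddAbove_of_small i)

theorem power_le_power_cof {μ κ : Cardinal.{u}} (hμ : ℵ₀ ≤ μ) (h : ∀ ν < μ, ν ^ κ ≤ μ) :
    μ ^ κ ≤ μ ^ μ.ord.cof := by
  induction κ using Cardinal.inductionOn with | _ α => ?_
  have : NoMaxOrder μ.ord.ToType :=
    isSuccPrelimit_type_lt_iff.mp (by simpa using (isSuccLimit_ord hμ).isSuccPrelimit)
  obtain ⟨S, hS, hSmk⟩ := Order.exists_cof_eq μ.ord.ToType
  rw [cof_toType] at hSmk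
  let trunc (f : α → μ.ord.ToType) (b : S) (x : α) : Option (Iio b.1) :=
    if hx : f x < b then some ⟨f x, hx⟩ else none
  have htrunc : Function.Injective trunc := by
    intro f g hfg
    funext x
    obtain ⟨c, hc⟩ := exists_gt (max (f x) (g x))
    obtain ⟨b, hbS, hcb⟩ := hS c
    have hfb : f x < b := ((le_max_left _ _).trans_lt hc).trans_le hcb
    have hgb : g x < b := ((le_max_right _ _).trans_lt hc).trans_le hcb
    simpa [trunc, hfb, hgb, Subtype.ext_iff] using congrFun (congrFun hfg ⟨b, hbS⟩) x
  calc μ ^ #α = #(α → μ.ord.ToType) := by rw [← power_def, mk_ord_toType]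
    _ ≤ #(Π b : S, α → Option (Iio b.1)) := mk_le_of_injective htrunc
    _ = prod fun b : S => (#(Iio b.1) + 1) ^ #α := by
      rw [mk_pi]; exact congrArg prod (funext fun b => by rw [← power_def, mk_option])
    _ ≤ prod fun _ : S => μ := prod_le_prod _ _ fun b =>
      h _ (add_lt_of_lt hμ (mk_Iio_ord_toType_lt _) (one_lt_aleph0.trans_le hμ))
    _ = μ ^ μ.ord.cof := by rw [prod_const', hSmk]

theorem power_le_self_of_lt_cof {μ κ : Cardinal.{u}} (hμ : ℵ₀ ≤ μ) (hκ : κ < μ.ord.cof)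
    (h : ∀ ν < μ, ν ^ κ ≤ μ) : μ ^ κ ≤ μ := by
  induction κ using Cardinal.inductionOn with | _ α => ?_
  have hbdd (f : α → μ.ord.ToType) : ∃ b, ∀ x, f x < b := by
    have hf : ¬ IsCofinal (range f) := fun hf =>
      ((Order.cof_le hf).trans mk_range_le).not_gt (by rwa [cof_toType])
    simpa using not_isCofinal_iff.mp hf
  choose bound hbound using hbdd
  have hinj : Function.Injective fun f : α → μ.ord.ToType =>
      (⟨bound f, fun x => ⟨f x, hbound f x⟩⟩ : Σ b : μ.ord.ToType, α → Iio b) := by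
    intro f g hfg
    funext x
    simpa using congrFun (congrArg (fun p : Σ b : μ.ord.ToType, α → Iio b =>
      fun x => ((p.2 x : Iio p.1) : μ.ord.ToType)) hfg) x
  calc μ ^ #α = #(α → μ.ord.ToType) := by rw [← power_def, mk_ord_toType]
    _ ≤ #(Σ b : μ.ord.ToType, α → Iio b) := mk_le_of_injective hinj
    _ = sum fun b : μ.ord.ToType => #(Iio b) ^ #α := by simp only [mk_sigma, ← power_def]
    _ ≤ sum fun _ : μ.ord.ToType => μ := sum_le_sum _ _ fun b => h _ (mk_Iio_ord_toType_lt b)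
    _ = μ := by rw [sum_const', mk_ord_toType, mul_eq_self hμ]

theorem exists_lt_power_le_power_of_cof_ord_lt {μ κ : Cardinal.{u}} (hκ : ℵ₀ ≤ κ)
    (hsing : κ.ord.cof < κ) (hμ : ℵ₀ ≤ μ) (h : ∀ ν < μ, ν ^ κ ≤ μ) :
    ∃ τ < κ, μ ^ κ ≤ μ ^ τ := by
  rcases lt_or_ge κ μ.ord.cof with hcof | hcof
  · exact ⟨1, one_lt_aleph0.trans_le hκ, by simpa using power_le_self_of_lt_cof hμ hcof h⟩
  · have hcof_ne : μ.ord.cof ≠ κ := fun heq =>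
      hsing.not_ge (heq ▸ (isRegular_cof (isSuccLimit_ord hμ)).2)
    exact ⟨μ.ord.cof, hcof.lt_of_ne hcof_ne, power_le_power_cof hμ h⟩

theorem power_le_iSup_power {ι : Type u} {f : ι → Cardinal.{u}} {κ μ : Cardinal.{u}}
    (hκ : ℵ₀ ≤ κ) (hsing : κ.ord.cof < κ) (hf : ⨆ i, f i = κ) (hμ : 2 ^ κ < μ) :
    μ ^ κ ≤ ⨆ i, μ ^ f i := by
  induction μ using WellFoundedLT.induction with | _ μ IH => ?_
  have hμκ : κ < μ := (cantor κ).trans hμ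
  have power_power_self (ν : Cardinal.{u}) : (ν ^ κ) ^ κ = ν ^ κ := by
    rw [← power_mul, mul_eq_self hκ]
  by_cases hjump : ∃ ν < μ, μ ≤ ν ^ κ
  · obtain ⟨ν, hνμ, hμν⟩ := hjump
    have hν : 2 ^ κ < ν := lt_of_not_ge fun hν => hμ.not_ge <|
      hμν.trans ((power_le_power_right hν).trans_eq (power_power_self 2))
    calc μ ^ κ ≤ (ν ^ κ) ^ κ := power_le_power_right hμν
      _ = ν ^ κ := power_power_self ν
      _ ≤ ⨆ i, ν ^ f i := IH ν hνμ hν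
      _ ≤ ⨆ i, μ ^ f i := ciSup_mono bddAbove_of_small fun i => power_le_power_right hνμ.le
  · push Not at hjump
    obtain ⟨τ, hτ, hμτ⟩ := exists_lt_power_le_power_of_cof_ord_lt hκ hsing
      (hκ.trans hμκ.le) fun ν hν => (hjump ν hν).le
    exact hμτ.trans (power_le_iSup_power_of_lt_iSup (ne_zero_of_lt hμκ) (hf ▸ hτ))

theorem mk_bounded_set_eq {Y : Type u} {c : Cardinal.{u}} (hY : ℵ₀ ≤ #Y) (hc : c ≤ #Y) :
    #{s : Set Y // #s ≤ c} = #Y ^ c := by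
  refine le_antisymm ((mk_bounded_set_le Y c).trans_eq (by rw [max_eq_left hY])) ?_
  induction c using Cardinal.inductionOn with | _ α => ?_
  obtain ⟨e⟩ : Nonempty (α × Y ↪ Y) := by
    rw [← le_def, mk_prod, lift_id, lift_id]
    exact mul_le_of_le hY hc le_rfl
  let graph (f : α → Y) : {s : Set Y // #s ≤ #α} := ⟨range fun x => e (x, f x), mk_range_le⟩
  have hgraph : Function.Injective graph := by
    intro f g hfg
    funext x
    have hrange : (range fun x => e (x, f x)) = range fun x => e (x, g x) :=
      congrArg Subtype.val hfg
    obtain ⟨y, hy⟩ : e (x, f x) ∈ range fun x => e (x, g x) := hrange ▸ mem_range_self x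
    obtain ⟨rfl, hgf⟩ := Prod.ext_iff.mp (e.injective hy)
    exact hgf.symm
  rw [power_def]
  exact mk_le_of_injective hgraph

theorem mk_bounded_set_le_mul_of_cofinal {Y : Type u} {c : Cardinal.{u}}
    {Q : Set {s : Set Y // #s ≤ c}} (hQ : ∀ a : {s : Set Y // #s ≤ c}, ∃ b ∈ Q, a.1 ⊆ b.1) :
    #{s : Set Y // #s ≤ c} ≤ #Q * 2 ^ c := by
  choose g hgQ hag using hQ
  have image_preimage (a : {s : Set Y // #s ≤ c}) :
      ((↑) : (g a).1 → Y) '' ((↑) ⁻¹' a.1) = a.1 := by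
    rw [Subtype.image_preimage_coe, inter_eq_right.mpr (hag a)]
  have hinj : Function.Injective fun a => (⟨⟨g a, hgQ a⟩, (↑) ⁻¹' a.1⟩ : Σ q : Q, Set q.1.1) := by
    intro a a' h
    have := congrArg (fun p : Σ q : Q, Set q.1.1 => ((↑) : p.1.1.1 → Y) '' p.2) h
    simp only [image_preimage] at this
    exact Subtype.ext this
  calc #{s : Set Y // #s ≤ c} ≤ #(Σ q : Q, Set q.1.1) := mk_le_of_injective hinj
    _ = sum fun q : Q => 2 ^ #q.1.1 := by simp only [mk_sigma, mk_set]
    _ ≤ sum fun _ : Q => 2 ^ c := sum_le_sum _ _ fun q => power_le_power_left two_ne_zero q.1.2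
    _ = #Q * 2 ^ c := sum_const' _ _

end Cardinal

theorem covCof_eq_power {Y : Type u} {c : Cardinal.{u}} (hY : ℵ₀ ≤ #Y) (hc : 2 ^ c < #Y) :
    covCof Y c = #Y ^ c := by
  have hcard := mk_bounded_set_eq hY ((cantor c).le.trans hc.le)
  have univ_cofinal (a : {s : Set Y // #s ≤ c}) :
      ∃ b ∈ (Set.univ : Set {s : Set Y // #s ≤ c}), a.1 ⊆ b.1 :=
    ⟨a, mem_univ a, subset_rfl⟩
  refine le_antisymm (csInf_le' ⟨Set.univ, by rw [mk_univ, hcard], univ_cofinal⟩)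
    (le_csInf ⟨_, Set.univ, rfl, univ_cofinal⟩ ?_)
  rintro _ ⟨Q, rfl, hQ⟩
  have hle : #Y ^ c ≤ #Q * 2 ^ c := hcard ▸ mk_bounded_set_le_mul_of_cofinal hQ
  rcases eq_or_ne c 0 with rfl | hc0
  · simpa using hle
  · have hYc : #Y ≤ #Y ^ c := self_le_power _ (Cardinal.one_le_iff_ne_zero.mpr hc0)
    by_contra! hQc
    exact hle.not_gt (mul_lt_of_lt (hY.trans hYc) hQc (hc.trans_le hYc))

theorem stmt18_general (κ σ : Cardinal.{u}) (hκinf : Cardinal.aleph0 ≤ κ)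
    (hκsing : κ.ord.cof < κ)
    (κs : σ.ord.ToType → Cardinal.{u})
    (hbet : ∀ i, σ < κs i ∧ κs i < κ)
    (hsup : (⨆ i, κs i) = κ)
    (lam : Cardinal.{u}) (hlam : (2 : Cardinal.{u}) ^ κ < lam) :
    lam ^ κ = (⨆ i, lam ^ κs i) ∧
    lam ^ κ = (⨆ i, covCof lam.ord.ToType (κs i)) := by
  have hκlam : κ < lam := (cantor κ).trans hlam
  have hpow : lam ^ κ = ⨆ i, lam ^ κs i :=
    (power_le_iSup_power hκinf hκsing hsup hlam).antisymm
      (ciSup_le' fun i => power_le_power_left (ne_zero_of_lt hκlam) (hbet i).2.le)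
  have hcov (i) : covCof lam.ord.ToType (κs i) = lam ^ κs i := by
    simpa using covCof_eq_power (Y := lam.ord.ToType) (by simpa using hκinf.trans hκlam.le)
      (by simpa using (power_le_power_left two_ne_zero (hbet i).2.le).trans_lt hlam)
  simp only [hcov]
  exact ⟨hpow, hpow⟩

/-- If `κ` is singular with `σ = cf(κ)`, `⟨κ_i : i < σ⟩` is a strictly increasing
sequence of regular cardinals with supremum `κ` and `σ < κ_i < κ`, and
`λ > 2^κ`, then `λ^κ = sup_i λ^{κ_i} = sup_i cf([λ]^{≤κ_i}, ⊆)`. -/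
theorem stmt18 (κ σ : Cardinal.{u}) (hκinf : Cardinal.aleph0 ≤ κ)
    (hκsing : κ.ord.cof < κ) (hσ : σ = κ.ord.cof)
    (κs : σ.ord.ToType → Cardinal.{u})
    (hreg : ∀ i, (κs i).IsRegular)
    (hmono : ∀ i j, i < j → κs i < κs j)
    (hbet : ∀ i, σ < κs i ∧ κs i < κ)
    (hsup : (⨆ i, κs i) = κ)
    (lam : Cardinal.{u}) (hlam : (2 : Cardinal.{u}) ^ κ < lam) :
    lam ^ κ = (⨆ i, lam ^ κs i) ∧
    lam ^ κ = (⨆ i, covCof lam.ord.ToType (κs i)) :=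
  stmt18_general κ σ hκinf hκsing κs hbet hsup lam hlam
end

section
/- Let κ be a singular cardinal, σ = cf(κ), and let ⟨κ_i : i < σ⟩ be a strictly increasing sequence of regular cardinals with supremum κ such that σ < κ_i < κ for every i < σ. Let λ be a cardinal with 2 ≤ λ ≤ 2^κ. Then λ^κ = 2^κ = cf([μ]^{≤σ}, ⊆), where μ is the cardinal sum Σ_{i<σ} 2^{κ_i}. -/
/-!
Since `κ = Σ_{i<σ} κ_i`, we have `2^κ = ∏_{i<σ} 2^{κ_i} ≤ μ^σ ≤ (2^κ)^σ = 2^κ`. On the other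
hand `μ ≥ 2^{κ_i} ≥ 2^σ`, and for any set `Y` with `|Y| ≥ 2^σ` a cofinal family `Q` in
`[Y]^{≤σ}` already has size `|[Y]^{≤σ}| = |Y|^σ`: `Q` covers `Y` by sets of size `≤ σ`, so
`|Q| ≥ |Y| ≥ 2^σ`, and every member of `[Y]^{≤σ}` is one of the `2^σ` subsets of some
member of `Q`.
-/

open Cardinal

abbrev BoundedSet (Y : Type u) (κ : Cardinal.{u}) : Type u := {s : Set Y // #s ≤ κ}

section BoundedSet

variable {Y : Type u} {κ : Cardinal.{u}}

theorem power_le_mk_boundedSet (hY : ℵ₀ ≤ #Y) (hκ : κ ≤ #Y) : #Y ^ κ ≤ #(BoundedSet Y κ) := by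
  obtain ⟨e⟩ : Nonempty (κ.out × Y ↪ Y) := by
    rw [← le_def, mk_prod, lift_id, lift_id, mk_out]
    exact (mul_le_mul_left hκ _).trans (mul_eq_self hY).le
  rw [← mk_out κ, power_def]
  -- a function is sent to (a copy of) its graph
  refine mk_le_of_injective (f := fun g => ⟨Set.range fun k => e (k, g k), mk_range_le⟩)
    fun g g' h => funext fun k => ?_
  have hgraph : (Set.range fun k => e (k, g k)) = Set.range fun k => e (k, g' k) :=
    Subtype.ext_iff.1 h
  obtain ⟨k', hk'⟩ : e (k, g k) ∈ Set.range fun k => e (k, g' k) :=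
    hgraph ▸ Set.mem_range_self k
  obtain ⟨rfl, hg⟩ := Prod.mk.inj (e.injective hk')
  exact hg.symm

theorem mk_boundedSet_eq_power (hY : ℵ₀ ≤ #Y) (hκ : κ ≤ #Y) : #(BoundedSet Y κ) = #Y ^ κ :=
  le_antisymm ((mk_bounded_set_le Y κ).trans_eq (by rw [max_eq_left hY]))
    (power_le_mk_boundedSet hY hκ)

variable {Q : Set (BoundedSet Y κ)}

theorem mk_le_mk_mul_of_isCofinal (hκ : 1 ≤ κ) (hQ : IsCofinal Q) : #Y ≤ #Q * κ := by
  have hcover : (⋃ b ∈ Q, b.1) = Set.univ := by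
    refine Set.eq_univ_of_forall fun y => ?_
    obtain ⟨b, hb, hyb⟩ := hQ ⟨{y}, by rwa [mk_singleton]⟩
    exact Set.mem_biUnion hb (hyb rfl)
  calc #Y = #(⋃ b ∈ Q, b.1) := by rw [hcover, mk_univ]
    _ ≤ #Q * ⨆ b : Q, #b.1.1 := mk_biUnion_le _ Q
    _ ≤ #Q * κ := by gcongr; exact ciSup_le' fun b => b.1.2

theorem mk_boundedSet_le_mk_mul_of_isCofinal (hQ : IsCofinal Q) :
    #(BoundedSet Y κ) ≤ #Q * 2 ^ κ := by
  have hcover : (⋃ b ∈ Q, Set.Iic b) = Set.univ :=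
    Set.eq_univ_of_forall fun a => by
      obtain ⟨b, hb, hab⟩ := hQ a
      exact Set.mem_biUnion hb hab
  have hbelow (b : BoundedSet Y κ) : #(Set.Iic b) ≤ 2 ^ κ :=
    calc #(Set.Iic b) = #(Subtype.val '' Set.Iic b) := (mk_image_eq Subtype.val_injective).symm
      _ ≤ #(𝒫 b.1) := mk_le_mk_of_subset (by rintro _ ⟨a, ha, rfl⟩; exact ha)
      _ ≤ 2 ^ κ := (mk_powerset _).trans_le (power_le_power_left two_ne_zero b.2)
  calc #(BoundedSet Y κ) = #(⋃ b ∈ Q, Set.Iic b) := by rw [hcover, mk_univ]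
    _ ≤ #Q * ⨆ b : Q, #(Set.Iic b.1) := mk_biUnion_le _ Q
    _ ≤ #Q * 2 ^ κ := by gcongr; exact ciSup_le' fun b => hbelow b.1

theorem mk_boundedSet_le_of_isCofinal (hκ : ℵ₀ ≤ κ) (hY : 2 ^ κ ≤ #Y) (hQ : IsCofinal Q) :
    #(BoundedSet Y κ) ≤ #Q := by
  have hYQ : #Y ≤ #Q := by
    have := (mk_le_mk_mul_of_isCofinal (one_le_aleph0.trans hκ) hQ).trans
      (mul_le_max_of_aleph0_le_right hκ)
    exact (le_max_iff.1 this).resolve_right ((cantor κ).trans_le hY).not_ge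
  calc #(BoundedSet Y κ) ≤ #Q * 2 ^ κ := mk_boundedSet_le_mk_mul_of_isCofinal hQ
    _ ≤ max #Q (2 ^ κ) := mul_le_max_of_aleph0_le_right (hκ.trans (cantor κ).le)
    _ = #Q := max_eq_left (hY.trans hYQ)

theorem covCof_eq_mk_boundedSet (hκ : ℵ₀ ≤ κ) (hY : 2 ^ κ ≤ #Y) :
    covCof Y κ = #(BoundedSet Y κ) := by
  have huniv : #(BoundedSet Y κ) ∈ {c : Cardinal.{u} |
      ∃ Q : Set (BoundedSet Y κ), #Q = c ∧ ∀ a : BoundedSet Y κ, ∃ b ∈ Q, a.1 ⊆ b.1} :=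
    ⟨Set.univ, mk_univ, IsCofinal.univ⟩
  refine le_antisymm (csInf_le' huniv) (le_csInf ⟨_, huniv⟩ ?_)
  rintro _ ⟨Q, rfl, hQ⟩
  exact mk_boundedSet_le_of_isCofinal hκ hY hQ

theorem covCof_eq_power_s19 (hκ : ℵ₀ ≤ κ) (hY : 2 ^ κ ≤ #Y) : covCof Y κ = #Y ^ κ := by
  have hκY : κ ≤ #Y := (cantor κ).le.trans hY
  rw [covCof_eq_mk_boundedSet hκ hY, mk_boundedSet_eq_power (hκ.trans hκY) hκY]

end BoundedSet

theorem sum_two_power_power_mk_eq {ι : Type u} {f : ι → Cardinal.{u}} {κ : Cardinal.{u}}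
    (hκ : ℵ₀ ≤ κ) (hι : #ι ≤ κ) (hsum : sum f = κ) :
    (sum fun i => (2 : Cardinal.{u}) ^ f i) ^ #ι = 2 ^ κ := by
  refine le_antisymm ?_ ?_
  · have hle : (sum fun i => (2 : Cardinal.{u}) ^ f i) ≤ 2 ^ κ :=
      calc (sum fun i => (2 : Cardinal.{u}) ^ f i) ≤ sum fun _ : ι => (2 : Cardinal.{u}) ^ κ :=
            sum_le_sum _ _ fun i => power_le_power_left two_ne_zero (hsum ▸ le_sum f i)
        _ = #ι * 2 ^ κ := sum_const' ι _
        _ ≤ max #ι (2 ^ κ) := mul_le_max_of_aleph0_le_right (hκ.trans (cantor κ).le)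
        _ = 2 ^ κ := max_eq_right (hι.trans (cantor κ).le)
    calc (sum fun i => (2 : Cardinal.{u}) ^ f i) ^ #ι ≤ (2 ^ κ) ^ #ι := power_le_power_right hle
      _ = 2 ^ (κ * #ι) := power_mul.symm
      _ ≤ 2 ^ (κ * κ) := power_le_power_left two_ne_zero (mul_le_mul_right hι κ)
      _ = 2 ^ κ := by rw [mul_eq_self hκ]
  · calc (2 : Cardinal.{u}) ^ κ = prod fun i => (2 : Cardinal.{u}) ^ f i := by
          rw [← hsum, power_sum]
      _ ≤ prod fun _ : ι => sum fun i => (2 : Cardinal.{u}) ^ f i :=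
          prod_le_prod _ _ fun i => le_sum _ i
      _ = _ := prod_const' ι _

theorem power_eq_two_power_of_le_two_power {κ lam : Cardinal.{u}} (hκ : ℵ₀ ≤ κ)
    (hlam2 : 2 ≤ lam) (hlam : lam ≤ 2 ^ κ) : lam ^ κ = 2 ^ κ :=
  le_antisymm ((power_le_power_right hlam).trans_eq (by rw [← power_mul, mul_eq_self hκ]))
    (power_le_power_right hlam2)

theorem stmt19_general (κ σ : Cardinal.{u}) (hκinf : Cardinal.aleph0 ≤ κ)
    (hκsing : κ.ord.cof < κ) (hσ : σ = κ.ord.cof)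
    (κs : σ.ord.ToType → Cardinal.{u})
    (hsup : (⨆ i, κs i) = κ)
    (lam : Cardinal.{u}) (hlam2 : 2 ≤ lam) (hlam : lam ≤ (2 : Cardinal.{u}) ^ κ) :
    lam ^ κ = (2 : Cardinal.{u}) ^ κ ∧
    (2 : Cardinal.{u}) ^ κ =
      covCof (Cardinal.sum fun i => (2 : Cardinal.{u}) ^ κs i).ord.ToType σ := by
  have hσinf : ℵ₀ ≤ σ :=
    hσ ▸ Ordinal.aleph0_le_cof_iff.2 (Ordinal.one_lt_cof_iff.2 (isSuccLimit_ord hκinf))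
  have hσκ : σ < κ := hσ ▸ hκsing
  have hι : #σ.ord.ToType = σ := by rw [mk_toType, card_ord]
  have hsum : sum κs = κ :=
    (sum_eq_iSup_of_mk_le_iSup (by rwa [hι]) (by rw [hι, hsup]; exact hσκ.le)).trans hsup
  obtain ⟨i, hi⟩ := exists_lt_of_lt_ciSup' (hsup ▸ hσκ)
  have h2σ : 2 ^ σ ≤ #(sum fun i => (2 : Cardinal.{u}) ^ κs i).ord.ToType := by
    rw [mk_toType, card_ord]
    exact (power_le_power_left two_ne_zero hi.le).trans (le_sum _ i)
  refine ⟨power_eq_two_power_of_le_two_power hκinf hlam2 hlam, ?_⟩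
  have hpow := sum_two_power_power_mk_eq hκinf (hι.trans_le hσκ.le) hsum
  rw [hι] at hpow
  rw [covCof_eq_power_s19 hσinf h2σ, mk_toType, card_ord, hpow]

/-- If `κ` is singular with `σ = cf(κ)`, `⟨κ_i : i < σ⟩` is a strictly increasing
sequence of regular cardinals with supremum `κ` and `σ < κ_i < κ`, and
`2 ≤ λ ≤ 2^κ`, then `λ^κ = 2^κ = cf([μ]^{≤σ}, ⊆)` where `μ = Σ_{i<σ} 2^{κ_i}`. -/
theorem stmt19 (κ σ : Cardinal.{u}) (hκinf : Cardinal.aleph0 ≤ κ)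
    (hκsing : κ.ord.cof < κ) (hσ : σ = κ.ord.cof)
    (κs : σ.ord.ToType → Cardinal.{u})
    (hreg : ∀ i, (κs i).IsRegular)
    (hmono : ∀ i j, i < j → κs i < κs j)
    (hbet : ∀ i, σ < κs i ∧ κs i < κ)
    (hsup : (⨆ i, κs i) = κ)
    (lam : Cardinal.{u}) (hlam2 : 2 ≤ lam) (hlam : lam ≤ (2 : Cardinal.{u}) ^ κ) :
    lam ^ κ = (2 : Cardinal.{u}) ^ κ ∧
    (2 : Cardinal.{u}) ^ κ =
      covCof (Cardinal.sum fun i => (2 : Cardinal.{u}) ^ κs i).ord.ToType σ :=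
  stmt19_general κ σ hκinf hκsing hσ κs hsup lam hlam2 hlam
end
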